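/- Fix Λ ∈ ℝ and real parameters α, β, c, and let r_A = α(−K_2∧K_3 + J_2∧J_3) + β(−K_2∧J_3 + K_3∧J_2) + (c/2) K_1∧J_1 ∈ g_Λ ∧ g_Λ (the Type A classical r-matrix of the Lorentz algebra). Then the Schouten bracket [[r_A,r_A]] is invariant under the adjoint action of all of g_Λ (i.e. X·[[r_A,r_A]] = 0 for every X ∈ g_Λ, where X acts diagonally on g_Λ⊗g_Λ⊗g_Λ) if and only if α = β = 0; in that case r_A = (c/2)K_1∧J_1 and [[r_A,r_A]] = 0. -/

import Mathlib

namespace NCST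

noncomputable section

/-- The underlying 10-dimensional vector space of `g_Λ`, with basis indices
`0,1,2,3 ↦ P_0,P_1,P_2,P_3`, `4,5,6 ↦ K_1,K_2,K_3`, `7,8,9 ↦ J_1,J_2,J_3`. -/
abbrev V : Type := Fin 10 → ℝ

/-- The `i`-th basis vector. -/
def e (i : Fin 10) : V := Pi.single i 1

/-- The Levi-Civita symbol on `{1,2,3}` (indices shifted to `Fin 3`), `ε_{123} = 1`. -/
def eps (a b c : Fin 3) : ℝ :=
  if (a = 0 ∧ b = 1 ∧ c = 2) ∨ (a = 1 ∧ b = 2 ∧ c = 0) ∨ (a = 2 ∧ b = 0 ∧ c = 1) then 1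
  else if (a = 2 ∧ b = 1 ∧ c = 0) ∨ (a = 1 ∧ b = 0 ∧ c = 2) ∨ (a = 0 ∧ b = 2 ∧ c = 1) then -1
  else 0

/-- Translation generators `P_μ`, `μ = 0,1,2,3`. -/
def Pv (μ : Fin 4) : V := e ⟨μ.1, by have := μ.isLt; omega⟩
/-- Boost generators `K_a`, `a = 1,2,3` (index `a+1` in `Fin 3`-terms). -/
def Kv (a : Fin 3) : V := e ⟨a.1 + 4, by have := a.isLt; omega⟩
/-- Rotation generators `J_a`, `a = 1,2,3`. -/
def Jv (a : Fin 3) : V := e ⟨a.1 + 7, by have := a.isLt; omega⟩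

/-- Labels for the kinematical basis generators. -/
inductive Gen : Type
  | P : Fin 4 → Gen
  | K : Fin 3 → Gen
  | J : Fin 3 → Gen

/-- `[K_a, P_μ]`: equals `P_a` if `μ = 0` and `δ_{ab} P_0` if `μ = b ∈ {1,2,3}`. -/
def KPbra (a : Fin 3) (μ : Fin 4) : V :=
  if μ.1 = 0 then Pv ⟨a.1 + 1, by have := a.isLt; omega⟩
  else if μ.1 = a.1 + 1 then Pv 0 else 0

/-- `[J_a, P_μ]`: equals `0` if `μ = 0` and `ε_{abc} P_c` if `μ = b ∈ {1,2,3}`. -/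
def JPbra (a : Fin 3) (μ : Fin 4) : V :=
  if h : μ.1 = 0 then 0
  else ∑ c : Fin 3, eps a ⟨μ.1 - 1, by have := μ.isLt; omega⟩ c •
    Pv ⟨c.1 + 1, by have := c.isLt; omega⟩

/-- `[P_μ, P_ν]`: `[P_0,P_a] = -Λ K_a`, `[P_a,P_b] = Λ ε_{abc} J_c`. -/
def PPbra (Λ : ℝ) (μ ν : Fin 4) : V :=
  if _hμ : μ.1 = 0 then
    (if _hν : ν.1 = 0 then 0 else (-Λ) • Kv ⟨ν.1 - 1, by have := ν.isLt; omega⟩)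
  else if _hν : ν.1 = 0 then Λ • Kv ⟨μ.1 - 1, by have := μ.isLt; omega⟩
  else Λ • ∑ c : Fin 3, eps ⟨μ.1 - 1, by have := μ.isLt; omega⟩
    ⟨ν.1 - 1, by have := ν.isLt; omega⟩ c • Jv c

/-- `[K_a, K_b] = -ε_{abc} J_c`. -/
def KKbra (a b : Fin 3) : V := -∑ c : Fin 3, eps a b c • Jv c
/-- `[J_a, K_b] = ε_{abc} K_c`. -/
def JKbra (a b : Fin 3) : V := ∑ c : Fin 3, eps a b c • Kv c
/-- `[J_a, J_b] = ε_{abc} J_c`. -/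
def JJbra (a b : Fin 3) : V := ∑ c : Fin 3, eps a b c • Jv c

/-- The bracket of two basis generators of `g_Λ`, as in eq. (1) of the paper. -/
def genBra (Λ : ℝ) : Gen → Gen → V
  | .P μ, .P ν => PPbra Λ μ ν
  | .P μ, .K a => -KPbra a μ
  | .P μ, .J a => -JPbra a μ
  | .K a, .P μ => KPbra a μ
  | .K a, .K b => KKbra a b
  | .K a, .J b => -JKbra b a
  | .J a, .P μ => JPbra a μ
  | .J a, .K b => JKbra a b
  | .J a, .J b => JJbra a b

/-- Decoding of a `Fin 10` index into the corresponding generator label. -/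
def idxGen (i : Fin 10) : Gen :=
  if h : i.1 < 4 then .P ⟨i.1, h⟩
  else if h2 : i.1 < 7 then .K ⟨i.1 - 4, by omega⟩
  else .J ⟨i.1 - 7, by have := i.isLt; omega⟩

/-- The bracket of `g_Λ`, extended bilinearly from the structure constants. -/
def bra (Λ : ℝ) (x y : V) : V :=
  ∑ i : Fin 10, ∑ j : Fin 10, (x i * y j) • genBra Λ (idxGen i) (idxGen j)

/-- Coefficients of elements of `g_Λ ⊗ g_Λ` in the basis `e_i ⊗ e_j`. -/
abbrev T2 : Type := Fin 10 → Fin 10 → ℝ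
/-- Coefficients of elements of `g_Λ ⊗ g_Λ ⊗ g_Λ`. -/
abbrev T3 : Type := Fin 10 → Fin 10 → Fin 10 → ℝ

/-- The diagonal adjoint action `X·(a⊗b) = [X,a]⊗b + a⊗[X,b]` on `g_Λ ⊗ g_Λ`,
in coordinates; `adT Λ X r` is the cocommutator `δ_r(X)`. -/
def adT (Λ : ℝ) (X : V) (r : T2) : T2 :=
  fun k l => (∑ i : Fin 10, r i l * bra Λ X (e i) k) +
    ∑ j : Fin 10, r k j * bra Λ X (e j) l

/-- `x ∧ y := x ⊗ y - y ⊗ x`, in coordinates. -/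
def wedge (x y : V) : T2 := fun i j => x i * y j - x j * y i

/-- The wedge `e_i ∧ e_j` of two basis vectors. -/
def wEl (i j : Fin 10) : T2 := wedge (e i) (e j)

/-- The Schouten bracket `[[r,r]]` of `r ∈ g_Λ ⊗ g_Λ`, in coordinates:
`[[r,r]] = [r_{12},r_{13}] + [r_{12},r_{23}] + [r_{13},r_{23}]`, i.e. for
`r = Σ aᵢ⊗bᵢ`, `[[r,r]] = Σᵢⱼ ([aᵢ,aⱼ]⊗bᵢ⊗bⱼ + aᵢ⊗[bᵢ,aⱼ]⊗bⱼ + aᵢ⊗aⱼ⊗[bᵢ,bⱼ])`. -/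
def schouten (Λ : ℝ) (r : T2) : T3 :=
  fun p q s =>
    ∑ i : Fin 10, ∑ j : Fin 10, ∑ k : Fin 10, ∑ l : Fin 10, r i j * r k l *
      (bra Λ (e i) (e k) p * (if j = q then (1:ℝ) else 0) * (if l = s then (1:ℝ) else 0)
      + (if i = p then (1:ℝ) else 0) * bra Λ (e j) (e k) q * (if l = s then (1:ℝ) else 0)
      + (if i = p then (1:ℝ) else 0) * (if k = q then (1:ℝ) else 0) * bra Λ (e j) (e l) s)

/-- The diagonal adjoint action of `X ∈ g_Λ` on `g_Λ ⊗ g_Λ ⊗ g_Λ`, in coordinates. -/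
def adT3 (Λ : ℝ) (X : V) (T : T3) : T3 :=
  fun p q s => (∑ i : Fin 10, T i q s * bra Λ X (e i) p)
    + (∑ j : Fin 10, T p j s * bra Λ X (e j) q)
    + ∑ k : Fin 10, T p q k * bra Λ X (e k) s

/-- The Type A classical `r`-matrix of the Lorentz algebra:
`r_A = α(−K_2∧K_3 + J_2∧J_3) + β(−K_2∧J_3 + K_3∧J_2) + (c/2) K_1∧J_1`. -/
def rA (α β c : ℝ) : T2 :=
  α • (-(wEl 5 6) + wEl 8 9) + β • (-(wEl 5 9) + wEl 6 8) + (c / 2) • wEl 4 7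

/-! Every row of `r_A` lies in the Lorentz subalgebra `so(3,1) = span {K_a, J_a}`, so
`[[r_A, r_A]]` has no component with a `P`-index. Acting with `P₀` on such a tensor, the only
way to produce a `P₁`-component is `[P₀, K₁] = -P₁`, so `P₀`-invariance forces the `K₁`-slice
of `[[r_A, r_A]]` to vanish. Its `(K₁, K₂, K₃)` and `(K₁, K₂, J₃)` entries are `2αβ` and
`β² - α²`, hence `α = β = 0`. Conversely `r_A` is then a multiple of `K₁ ∧ J₁`, and the Schouten
bracket of a wedge of two commuting elements vanishes. -/

section Bracket

variable (Λ : ℝ)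

lemma bra_e (i j : Fin 10) : bra Λ (e i) (e j) = genBra Λ (idxGen i) (idxGen j) := by
  simp [bra, e, Pi.single_apply, ite_smul]

lemma eps_swap (a b c : Fin 3) : eps b a c = -eps a b c := by
  fin_cases a <;> fin_cases b <;> fin_cases c <;> simp [eps]

lemma genBra_swap (g h : Gen) : genBra Λ h g = -genBra Λ g h := by
  cases g with
  | P μ => cases h with
    | P ν => fin_cases μ <;> fin_cases ν <;> simp [genBra, PPbra, eps]
    | _ => simp [genBra]
  | K a => cases h with
    | K b => simp only [genBra, KKbra, eps_swap a b, neg_smul, Finset.sum_neg_distrib, neg_neg]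
    | _ => simp [genBra]
  | J a => cases h with
    | J b => simp only [genBra, JJbra, eps_swap a b, neg_smul, Finset.sum_neg_distrib]
    | _ => simp [genBra]

lemma bra_swap (x y : V) : bra Λ y x = -bra Λ x y := by
  simp only [bra, ← Finset.sum_neg_distrib, ← smul_neg]
  rw [Finset.sum_comm]
  refine Finset.sum_congr rfl fun i _ => Finset.sum_congr rfl fun j _ => ?_
  rw [genBra_swap, mul_comm]

lemma bra_self (x : V) : bra Λ x x = 0 :=
  self_eq_neg.mp (bra_swap Λ x x)

def braₗ : V →ₗ[ℝ] V →ₗ[ℝ] V :=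
  LinearMap.mk₂ ℝ (bra Λ)
    (fun x y z => by simp only [bra, Pi.add_apply, add_mul, add_smul, Finset.sum_add_distrib])
    (fun t x y => by
      simp only [bra, Pi.smul_apply, smul_eq_mul, mul_assoc, ← smul_smul, Finset.smul_sum])
    (fun x y z => by simp only [bra, Pi.add_apply, mul_add, add_smul, Finset.sum_add_distrib])
    (fun t x y => by
      simp only [bra, Pi.smul_apply, smul_eq_mul, mul_left_comm _ t, ← smul_smul, Finset.smul_sum])

lemma braₗ_apply (x y : V) : braₗ Λ x y = bra Λ x y := rfl

lemma bra_apply (x y : V) (p : Fin 10) :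
    bra Λ x y p = ∑ i, ∑ j, x i * y j * bra Λ (e i) (e j) p := by
  simp only [bra_e]
  rw [bra]
  simp [Finset.sum_apply]

end Bracket

def lorentz : Submodule ℝ V := Submodule.pi {i | (i : ℕ) < 4} fun _ => ⊥

lemma mem_lorentz {x : V} : x ∈ lorentz ↔ ∀ i : Fin 10, (i : ℕ) < 4 → x i = 0 := by
  simp [lorentz, Submodule.mem_pi]

lemma bra_e_mem_lorentz (Λ : ℝ) {i j : Fin 10} (hi : 4 ≤ (i : ℕ)) (hj : 4 ≤ (j : ℕ)) :
    bra Λ (e i) (e j) ∈ lorentz := by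
  rw [mem_lorentz, bra_e]
  intro p hp
  simp only [idxGen, show ¬ (i : ℕ) < 4 by omega, show ¬ (j : ℕ) < 4 by omega, dite_false]
  split_ifs <;> simp [genBra, KKbra, JKbra, JJbra, Kv, Jv, e, Pi.single_apply, Fin.ext_iff,
    Finset.sum_apply]
  all_goals exact Finset.sum_eq_zero fun c _ => if_neg (by omega)

lemma bra_mem_lorentz (Λ : ℝ) {x y : V} (hx : x ∈ lorentz) (hy : y ∈ lorentz) :
    bra Λ x y ∈ lorentz := by
  rw [mem_lorentz] at *
  intro p hp
  rw [bra_apply]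
  refine Finset.sum_eq_zero fun i _ => Finset.sum_eq_zero fun j _ => ?_
  by_cases hi : (i : ℕ) < 4
  · simp [hx i hi]
  by_cases hj : (j : ℕ) < 4
  · simp [hy j hj]
  rw [mem_lorentz.mp (bra_e_mem_lorentz Λ (not_lt.mp hi) (not_lt.mp hj)) p hp, mul_zero]

section Schouten

variable (Λ : ℝ)

lemma schouten_apply (r : T2) (p q s : Fin 10) :
    schouten Λ r p q s = bra Λ (fun i => r i q) (fun k => r k s) p
      + bra Λ (r p) (fun k => r k s) q + bra Λ (r p) (r q) s := by
  rw [bra_apply Λ (fun i => r i q), bra_apply Λ (r p), bra_apply Λ (r p)]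
  simp only [schouten, mul_add, Finset.sum_add_distrib, mul_ite, ite_mul, mul_zero, zero_mul,
    mul_one, one_mul, Finset.sum_ite_irrel, Finset.sum_const_zero, Finset.sum_ite_eq',
    Finset.mem_univ, if_true]

lemma schouten_apply_of_antisymm {r : T2} (hr : ∀ i j, r j i = -r i j) (p q s : Fin 10) :
    schouten Λ r p q s = bra Λ (r q) (r s) p - bra Λ (r p) (r s) q + bra Λ (r p) (r q) s := by
  have hcol (j : Fin 10) : (fun i => r i j) = -r j := funext fun i => hr j i
  rw [schouten_apply, hcol q, hcol s]
  simp only [← braₗ_apply, map_neg, LinearMap.neg_apply, neg_neg, Pi.neg_apply,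
    sub_eq_add_neg]

lemma schouten_apply_eq_zero_of_lt_four {r : T2} (hr : ∀ i j, r j i = -r i j)
    (hlor : ∀ i, r i ∈ lorentz) {p : Fin 10} (hp : (p : ℕ) < 4) (q s : Fin 10) :
    schouten Λ r p q s = 0 := by
  have hrow : r p = 0 := funext fun j => by
    rw [Pi.zero_apply, ← neg_eq_zero, ← hr]; exact mem_lorentz.mp (hlor j) p hp
  rw [schouten_apply_of_antisymm Λ hr, hrow,
    mem_lorentz.mp (bra_mem_lorentz Λ (hlor q) (hlor s)) p hp]
  simp [← braₗ_apply]

lemma schouten_smul_wedge_eq_zero (t : ℝ) {x y : V} (hxy : bra Λ x y = 0) :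
    schouten Λ (t • wedge x y) = 0 := by
  have hrow (p : Fin 10) : (t • wedge x y) p = (t * x p) • y - (t * y p) • x := by
    funext j; simp [wedge]; ring
  funext p q s
  rw [schouten_apply_of_antisymm Λ (fun i j => by simp [wedge]; ring)]
  simp only [hrow, ← braₗ_apply, map_sub, map_smul, LinearMap.sub_apply, LinearMap.smul_apply]
  simp [braₗ_apply, bra_self, bra_swap Λ x y, hxy]

end Schouten

lemma bra_e_zero_e_apply_one (Λ : ℝ) (i : Fin 10) :
    bra Λ (e 0) (e i) 1 = if i = 4 then -1 else 0 := by
  rw [bra_e]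
  fin_cases i <;> simp [idxGen, genBra, PPbra, KPbra, JPbra, Pv, Kv, e]

lemma adT3_e_zero_apply_one (Λ : ℝ) {T : T3} (hT : ∀ q s, T 1 q s = 0) (q s : Fin 10) :
    adT3 Λ (e 0) T 1 q s = -T 4 q s := by
  simp [adT3, hT, bra_e_zero_e_apply_one]

section TypeA

variable (α β c : ℝ)

lemma rA_antisymm (i j : Fin 10) : rA α β c j i = -rA α β c i j := by
  simp [rA, wEl, wedge]; ring

lemma rA_mem_lorentz (i : Fin 10) : rA α β c i ∈ lorentz := by
  rw [mem_lorentz]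
  intro j hj
  have (n : ℕ) (hn : 4 ≤ n) : (j : ℕ) ≠ n := by omega
  simp [rA, wEl, wedge, e, Pi.single_apply, Fin.ext_iff, this]

lemma rA_four : rA α β c 4 = (c / 2) • e 7 := by
  funext j; fin_cases j <;> simp [rA, wEl, wedge, e]

lemma rA_five : rA α β c 5 = -(α • e 6) - β • e 9 := by
  funext j; fin_cases j <;> simp [rA, wEl, wedge, e]

lemma rA_six : rA α β c 6 = α • e 5 + β • e 8 := by
  funext j; fin_cases j <;> simp [rA, wEl, wedge, e]

lemma rA_nine : rA α β c 9 = β • e 5 - α • e 8 := by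
  funext j; fin_cases j <;> simp [rA, wEl, wedge, e]

lemma schouten_rA_four_five_six (Λ : ℝ) : schouten Λ (rA α β c) 4 5 6 = 2 * (α * β) := by
  rw [schouten_apply_of_antisymm Λ (rA_antisymm α β c), rA_four, rA_five, rA_six]
  simp only [← braₗ_apply, map_add, map_sub, map_neg, map_smul, LinearMap.sub_apply,
    LinearMap.neg_apply, LinearMap.smul_apply]
  simp only [braₗ_apply, bra_e]
  simp [idxGen, genBra, KKbra, JKbra, JJbra, eps, Kv, Jv, e]
  ring

lemma schouten_rA_four_five_nine (Λ : ℝ) : schouten Λ (rA α β c) 4 5 9 = β ^ 2 - α ^ 2 := by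
  rw [schouten_apply_of_antisymm Λ (rA_antisymm α β c), rA_four, rA_five, rA_nine]
  simp only [← braₗ_apply, map_sub, map_neg, map_smul, LinearMap.sub_apply, LinearMap.neg_apply,
    LinearMap.smul_apply]
  simp only [braₗ_apply, bra_e]
  simp [idxGen, genBra, KKbra, JKbra, JJbra, eps, Kv, Jv, e]
  ring

end TypeA

lemma rA_zero_zero (c : ℝ) : rA 0 0 c = (c / 2) • wEl 4 7 := by
  simp [rA]

lemma bra_e_four_e_seven (Λ : ℝ) : bra Λ (e 4) (e 7) = 0 := by
  simp [bra_e, idxGen, genBra, JKbra, eps]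

lemma schouten_rA_zero_zero (Λ c : ℝ) : schouten Λ (rA 0 0 c) = 0 := by
  rw [rA_zero_zero]
  exact schouten_smul_wedge_eq_zero Λ _ (bra_e_four_e_seven Λ)

/-- `[[r_A,r_A]]` is `g_Λ`-invariant iff `α = β = 0`; in that case
`r_A = (c/2) K_1∧J_1` and `[[r_A,r_A]] = 0`. -/
theorem rA_schouten_invariant_iff (Λ α β c : ℝ) :
    ((∀ X : V, adT3 Λ X (schouten Λ (rA α β c)) = 0) ↔ (α = 0 ∧ β = 0)) ∧
    (α = 0 → β = 0 →
      rA α β c = (c / 2) • wEl 4 7 ∧ schouten Λ (rA α β c) = 0) := by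
  refine ⟨⟨fun h => ?_, ?_⟩, ?_⟩
  · have hP : ∀ q s, schouten Λ (rA α β c) 1 q s = 0 :=
      schouten_apply_eq_zero_of_lt_four Λ (rA_antisymm α β c) (rA_mem_lorentz α β c) (by decide)
    have h456 := adT3_e_zero_apply_one Λ hP 5 6
    have h459 := adT3_e_zero_apply_one Λ hP 5 9
    rw [h (e 0), schouten_rA_four_five_six] at h456
    rw [h (e 0), schouten_rA_four_five_nine] at h459
    simp only [Pi.zero_apply] at h456 h459
    have hsq : α ^ 2 = β ^ 2 := by linarith
    rcases mul_eq_zero.mp (show α * β = 0 by linarith) with rfl | rfl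
    · exact ⟨rfl, pow_eq_zero_iff two_ne_zero |>.mp (by linarith)⟩
    · exact ⟨pow_eq_zero_iff two_ne_zero |>.mp (by linarith), rfl⟩
  · rintro ⟨rfl, rfl⟩ X
    rw [schouten_rA_zero_zero]
    funext p q s
    simp [adT3]
  · rintro rfl rfl
    exact ⟨rA_zero_zero c, schouten_rA_zero_zero Λ c⟩

end
end NCST
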